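/- Entropic cost on the diagonal: under the hypotheses (Exi), (Reg1) and (Reg2) (applied with μ0 = μ1 = μ), the entropic cost satisfies A(μ,μ) ≥ H(μ|m). In particular, if m is a probability measure and μ ≠ m, then A(μ,μ) ≥ H(μ|m) > 0. -/

import Mathlib

open MeasureTheory Real Filter Set
open scoped ENNReal RealInnerProductSpace Topology

noncomputable section

open Classical in
/-- Relative entropy `H(q|r)` of a probability measure `q` with respect to a σ-finite
measure `r`, with value `⊤` when it is not (finitely) defined. -/
def relEnt {α : Type*} [MeasurableSpace α] (q r : Measure α) : EReal :=
  if q ≪ r ∧ Integrable (fun x => Real.log ((q.rnDeriv r x).toReal)) q then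
    (((∫ x, Real.log ((q.rnDeriv r x).toReal) ∂q) : ℝ) : EReal)
  else ⊤

/-- Entropic cost associated with a reference measure `r` on the product space:
infimum of `H(pl|r)` over couplings `pl` of `μ` and `ν`. -/
def entCost {α : Type*} [MeasurableSpace α] (r : Measure (α × α)) (μ ν : Measure α) : EReal :=
  sInf { e : EReal | ∃ pl : Measure (α × α), IsProbabilityMeasure pl ∧
    pl.map Prod.fst = μ ∧ pl.map Prod.snd = ν ∧ e = relEnt pl r }

/-- Laplacian of `f : ℝⁿ → ℝ` as the sum of second directional derivatives along the
standard basis. -/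
def lap (n : ℕ) (f : EuclideanSpace ℝ (Fin n) → ℝ) (x : EuclideanSpace ℝ (Fin n)) : ℝ :=
  ∑ i : Fin n, iteratedDeriv 2 (fun s : ℝ => f (x + s • EuclideanSpace.single i (1 : ℝ))) 0

/-- Existence hypothesis (Exi). -/
def Exi (n : ℕ) (V : EuclideanSpace ℝ (Fin n) → ℝ) : Prop :=
  (Tendsto V (cocompact (EuclideanSpace ℝ (Fin n))) atTop ∧
      BddBelow (Set.range fun x => ‖gradient V x‖ ^ 2 - lap n V x / 2)) ∨
    ∃ c : ℝ, 0 < c ∧ ∀ x : EuclideanSpace ℝ (Fin n), -⟪x, gradient V x⟫ ≤ c * (1 + ‖x‖ ^ 2)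

/-- The measure `m = e^{-V}·Leb`. -/
def mV (n : ℕ) (V : EuclideanSpace ℝ (Fin n) → ℝ) : Measure (EuclideanSpace ℝ (Fin n)) :=
  volume.withDensity fun x => ENNReal.ofReal (Real.exp (-V x))

/-- The semigroup associated with a kernel family `p` and reference measure `m`:
`T_t f (x) = ∫ f(y) p_t(x,y) m(dy)` for `t ≠ 0`, `T_0 f = f`. -/
def Tsg (n : ℕ) (m : Measure (EuclideanSpace ℝ (Fin n)))
    (p : ℝ → EuclideanSpace ℝ (Fin n) → EuclideanSpace ℝ (Fin n) → ℝ) (t : ℝ)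
    (f : EuclideanSpace ℝ (Fin n) → ℝ) (x : EuclideanSpace ℝ (Fin n)) : ℝ :=
  if t = 0 then f x else ∫ y, f y * p t x y ∂m

/-- Hypothesis (Reg1) together with the defining properties of the Kolmogorov
Markov semigroup with generator `½(Δ - ∇V·∇)`: `p` is a symmetric probability density
kernel with respect to `m`, satisfying the Chapman-Kolmogorov equation, and the
associated semigroup solves the backward Kolmogorov equation. -/
structure IsKolmogorov (n : ℕ) (V : EuclideanSpace ℝ (Fin n) → ℝ)
    (m : Measure (EuclideanSpace ℝ (Fin n)))
    (p : ℝ → EuclideanSpace ℝ (Fin n) → EuclideanSpace ℝ (Fin n) → ℝ) : Prop where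
  meas : ∀ t, Measurable (Function.uncurry (p t))
  nonneg : ∀ t x y, 0 ≤ p t x y
  symm : ∀ t x y, p t x y = p t y x
  mass : ∀ t, 0 < t → ∀ x, ∫ y, p t x y ∂m = 1
  chapman : ∀ s t, 0 < s → 0 < t → ∀ x y, ∫ z, p s x z * p t z y ∂m = p (s + t) x y
  generator : ∀ f : EuclideanSpace ℝ (Fin n) → ℝ, ContDiff ℝ (⊤ : ℕ∞) f →
    HasCompactSupport f → ∀ t, 0 < t → ∀ x,
      HasDerivAt (fun s => Tsg n m p s f x)
        (2⁻¹ * (lap n (Tsg n m p t f) x - ⟪gradient V x, gradient (Tsg n m p t f) x⟫)) t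

/-- Regularity hypothesis (Reg2) for the kernel `p` and the marginals `μ0, μ1`. -/
def Reg2 (n : ℕ) (m : Measure (EuclideanSpace ℝ (Fin n)))
    (p : EuclideanSpace ℝ (Fin n) → EuclideanSpace ℝ (Fin n) → ℝ)
    (μ0 μ1 : Measure (EuclideanSpace ℝ (Fin n))) : Prop :=
  (∃ A B : EuclideanSpace ℝ (Fin n) → ℝ, Measurable A ∧ Measurable B ∧
      (∀ x, 0 ≤ A x) ∧ (∀ x, 0 ≤ B x) ∧
      (∀ x y, Real.exp (-A x - A y) ≤ p x y) ∧
      Integrable (fun z : EuclideanSpace ℝ (Fin n) × EuclideanSpace ℝ (Fin n) =>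
        Real.exp (-B z.1 - B z.2) * p z.1 z.2) (m.prod m) ∧
      Integrable (fun x => A x + B x) μ0 ∧ Integrable (fun x => A x + B x) μ1) ∧
    relEnt μ0 m ≠ ⊤ ∧ relEnt μ1 m ≠ ⊤

/-- The joint law `R₀₁(dx dy) = m(dx) p(x,y) m(dy)` of the initial and final positions. -/
def R01 (n : ℕ) (m : Measure (EuclideanSpace ℝ (Fin n)))
    (p : EuclideanSpace ℝ (Fin n) → EuclideanSpace ℝ (Fin n) → ℝ) :
    Measure (EuclideanSpace ℝ (Fin n) × EuclideanSpace ℝ (Fin n)) :=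
  (m.prod m).withDensity fun z => ENNReal.ofReal (p z.1 z.2)

section AuxEntropy

variable {α : Type*} [MeasurableSpace α]

lemma relEnt_eq_of_cond {q r : Measure α} (h1 : q ≪ r) (h2 : Integrable (llr q r) q) :
    relEnt q r = ((∫ x, llr q r x ∂q : ℝ) : EReal) := by
  unfold relEnt
  rw [if_pos ⟨h1, h2⟩]
  rfl

lemma relEnt_eq_top_of_not {q r : Measure α}
    (h : ¬ (q ≪ r ∧ Integrable (fun x => Real.log ((q.rnDeriv r x).toReal)) q)) :
    relEnt q r = ⊤ := by
  unfold relEnt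
  rw [if_neg h]

lemma llr_aux_pointwise {t : ℝ} (ht : 0 ≤ t) : t - 1 ≤ t * Real.log t := by
  rcases eq_or_lt_of_le ht with h | h
  · simp [← h]
  · have h1 : Real.log t⁻¹ ≤ t⁻¹ - 1 := Real.log_le_sub_one_of_pos (by positivity)
    rw [Real.log_inv] at h1
    have h2 := mul_le_mul_of_nonneg_left h1 ht
    rw [mul_sub, mul_inv_cancel₀ (ne_of_gt h), mul_neg, mul_one] at h2
    linarith

lemma llr_aux_pointwise_strict {t : ℝ} (ht : 0 ≤ t) (hne : t ≠ 1) :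
    t - 1 < t * Real.log t := by
  rcases eq_or_lt_of_le ht with h | h
  · rw [← h]; norm_num
  · have hinv : t⁻¹ ≠ 1 := by
      simpa [inv_eq_one] using hne
    have h1 : Real.log t⁻¹ < t⁻¹ - 1 := Real.log_lt_sub_one_of_pos (by positivity) hinv
    rw [Real.log_inv] at h1
    have h2 := (mul_lt_mul_iff_right₀ h).mpr h1
    rw [mul_sub, mul_inv_cancel₀ (ne_of_gt h), mul_neg, mul_one] at h2
    linarith

lemma integral_llr_nonneg_strict {μ ν : Measure α} [IsProbabilityMeasure μ]
    [IsProbabilityMeasure ν] (hμν : μ ≪ ν) (h : Integrable (llr μ ν) μ) :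
    0 ≤ ∫ x, llr μ ν x ∂μ ∧ (μ ≠ ν → 0 < ∫ x, llr μ ν x ∂μ) := by
  have hint1 : Integrable (fun x => (μ.rnDeriv ν x).toReal * llr μ ν x) ν := by
    have := (integrable_rnDeriv_smul_iff (f := llr μ ν) hμν).mpr h
    simpa [smul_eq_mul] using this
  have hint2 : Integrable (fun x => (μ.rnDeriv ν x).toReal) ν :=
    Measure.integrable_toReal_rnDeriv
  have hint4 : Integrable (fun x => (μ.rnDeriv ν x).toReal - 1) ν :=
    hint2.sub (integrable_const 1)
  set g : α → ℝ := fun x =>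
    (μ.rnDeriv ν x).toReal * llr μ ν x - ((μ.rnDeriv ν x).toReal - 1) with hg
  have hgint : Integrable g ν := hint1.sub hint4
  have hgnn : ∀ x, 0 ≤ g x := by
    intro x
    have h1 := llr_aux_pointwise (ENNReal.toReal_nonneg (a := μ.rnDeriv ν x))
    have h2 : llr μ ν x = Real.log (μ.rnDeriv ν x).toReal := rfl
    simp only [hg, h2]
    linarith
  have hf1 : ∫ x, (μ.rnDeriv ν x).toReal ∂ν = 1 := by
    rw [Measure.integral_toReal_rnDeriv hμν]; simp
  have heq : ∫ x, llr μ ν x ∂μ = ∫ x, g x ∂ν := by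
    have e1 := integral_rnDeriv_smul (f := llr μ ν) hμν
    simp only [smul_eq_mul] at e1
    have e2 : ∫ x, g x ∂ν = (∫ x, (μ.rnDeriv ν x).toReal * llr μ ν x ∂ν) -
        ∫ x, ((μ.rnDeriv ν x).toReal - 1) ∂ν := integral_sub hint1 hint4
    have e3 : ∫ x, ((μ.rnDeriv ν x).toReal - 1) ∂ν =
        (∫ x, (μ.rnDeriv ν x).toReal ∂ν) - ∫ _x, (1 : ℝ) ∂ν :=
      integral_sub hint2 (integrable_const 1)
    rw [e2, e3, hf1, e1]
    simp
  have hnn : 0 ≤ ∫ x, llr μ ν x ∂μ := by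
    rw [heq]; exact integral_nonneg hgnn
  refine ⟨hnn, fun hne => ?_⟩
  rcases lt_or_eq_of_le hnn with hlt | heq0
  · exact hlt
  · exfalso
    apply hne
    rw [← Measure.rnDeriv_eq_one_iff_eq hμν]
    have hz : g =ᵐ[ν] 0 :=
      (integral_eq_zero_iff_of_nonneg hgnn hgint).mp (by rw [← heq, ← heq0])
    filter_upwards [hz, Measure.rnDeriv_lt_top μ ν] with x hx hxt
    have h1 : (μ.rnDeriv ν x).toReal = 1 := by
      by_contra hne1
      have hstr := llr_aux_pointwise_strict (ENNReal.toReal_nonneg (a := μ.rnDeriv ν x)) hne1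
      have h2 : llr μ ν x = Real.log (μ.rnDeriv ν x).toReal := rfl
      simp only [hg, h2, Pi.zero_apply] at hx
      linarith
    simpa using (ENNReal.toReal_eq_one_iff _).mp h1

lemma integral_llr_fst_le {m : Measure α} [SigmaFinite m]
    {R : Measure (α × α)} [SigmaFinite R] (hR : R.map Prod.fst = m)
    {μ : Measure α} [IsProbabilityMeasure μ] (hμm : μ ≪ m) (hμint : Integrable (llr μ m) μ)
    {pl : Measure (α × α)} [IsProbabilityMeasure pl] (hpl : pl.map Prod.fst = μ)
    (hplR : pl ≪ R) (hplint : Integrable (llr pl R) pl) :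
    ∫ x, llr μ m x ∂μ ≤ ∫ z, llr pl R z ∂pl := by
  have hfmeas : Measurable (μ.rnDeriv m) := Measure.measurable_rnDeriv μ m
  set ρ : Measure (α × α) := R.withDensity (fun z => μ.rnDeriv m z.1) with hρ
  have hρuniv : ρ Set.univ = 1 := by
    rw [hρ, withDensity_apply _ MeasurableSet.univ, Measure.restrict_univ,
      ← lintegral_map hfmeas measurable_fst, hR, Measure.lintegral_rnDeriv hμm]
    exact measure_univ
  haveI : IsProbabilityMeasure ρ := ⟨hρuniv⟩
  have hS : ∀ᵐ z ∂pl, 0 < μ.rnDeriv m z.1 ∧ μ.rnDeriv m z.1 < ∞ := by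
    have hμae : ∀ᵐ x ∂μ, 0 < μ.rnDeriv m x ∧ μ.rnDeriv m x < ∞ :=
      (Measure.rnDeriv_pos hμm).and (hμm.ae_le (Measure.rnDeriv_lt_top μ m))
    have hμae' : ∀ᵐ x ∂(pl.map Prod.fst), 0 < μ.rnDeriv m x ∧ μ.rnDeriv m x < ∞ := by
      rw [hpl]; exact hμae
    exact ae_of_ae_map measurable_fst.aemeasurable hμae'
  have hmeasc : Measurable fun z : α × α => μ.rnDeriv m z.1 := hfmeas.comp measurable_fst
  have hmeasNe : MeasurableSet {z : α × α | μ.rnDeriv m z.1 ≠ 0} :=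
    (hmeasc (measurableSet_singleton 0)).compl
  have hplρ : pl ≪ ρ := by
    refine Measure.AbsolutelyContinuous.mk fun A hA hA0 => ?_
    rw [hρ, withDensity_apply _ hA,
      lintegral_eq_zero_iff hmeasc] at hA0
    have h2' : (R.restrict A) {z : α × α | μ.rnDeriv m z.1 ≠ 0} = 0 := by
      rw [measure_eq_zero_iff_ae_notMem]
      filter_upwards [hA0] with z hz
      simpa using hz
    rw [Measure.restrict_apply hmeasNe] at h2'
    have h3 : pl ({z : α × α | μ.rnDeriv m z.1 ≠ 0} ∩ A) = 0 := hplR h2'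
    have h4 : pl {z : α × α | μ.rnDeriv m z.1 = 0} = 0 := by
      rw [measure_eq_zero_iff_ae_notMem]
      filter_upwards [hS] with z hz
      simpa using hz.1.ne'
    have hsub : A ⊆ ({z : α × α | μ.rnDeriv m z.1 ≠ 0} ∩ A) ∪
        {z : α × α | μ.rnDeriv m z.1 = 0} := by
      intro z hzA
      by_cases hz : μ.rnDeriv m z.1 = 0
      · exact Or.inr hz
      · exact Or.inl ⟨hz, hzA⟩
    refine le_antisymm ?_ zero_le
    calc pl A ≤ pl (({z : α × α | μ.rnDeriv m z.1 ≠ 0} ∩ A) ∪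
          {z : α × α | μ.rnDeriv m z.1 = 0}) := measure_mono hsub
      _ ≤ pl ({z : α × α | μ.rnDeriv m z.1 ≠ 0} ∩ A) +
          pl {z : α × α | μ.rnDeriv m z.1 = 0} := measure_union_le _ _
      _ = 0 := by rw [h3, h4, add_zero]
  have hmul : ∀ᵐ z ∂pl, pl.rnDeriv R z = pl.rnDeriv ρ z * μ.rnDeriv m z.1 := by
    have e1 : pl.rnDeriv ρ * ρ.rnDeriv R =ᵐ[R] pl.rnDeriv R :=
      Measure.rnDeriv_mul_rnDeriv hplρ
    have e2 : ρ.rnDeriv R =ᵐ[R] fun z => μ.rnDeriv m z.1 :=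
      Measure.rnDeriv_withDensity R hmeasc
    filter_upwards [hplR.ae_le e1, hplR.ae_le e2] with z h1 h2
    rw [← h1, Pi.mul_apply, h2]
  have hch : ∀ᵐ z ∂pl, llr pl R z = llr pl ρ z + llr μ m z.1 := by
    filter_upwards [hmul, hS, Measure.rnDeriv_pos hplρ,
      hplρ.ae_le (Measure.rnDeriv_lt_top pl ρ)] with z h1 h2 h3 h4
    have t1 : (pl.rnDeriv ρ z).toReal ≠ 0 := (ENNReal.toReal_pos h3.ne' h4.ne).ne'
    have t2 : (μ.rnDeriv m z.1).toReal ≠ 0 := (ENNReal.toReal_pos h2.1.ne' h2.2.ne).ne'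
    have hd : llr pl R z = Real.log ((pl.rnDeriv ρ z).toReal * (μ.rnDeriv m z.1).toReal) := by
      have : llr pl R z = Real.log (pl.rnDeriv R z).toReal := rfl
      rw [this, h1, ENNReal.toReal_mul]
    rw [hd, Real.log_mul t1 t2]
    rfl
  have hint2 : Integrable (fun z : α × α => llr μ m z.1) pl := by
    have h0 : Integrable (llr μ m) (pl.map Prod.fst) := hpl ▸ hμint
    rw [integrable_map_measure (stronglyMeasurable_llr _ _).aestronglyMeasurable
      measurable_fst.aemeasurable] at h0
    exact h0
  have hint3 : Integrable (llr pl ρ) pl := by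
    apply Integrable.congr (hplint.sub hint2)
    filter_upwards [hch] with z hz
    show llr pl R z - llr μ m z.1 = llr pl ρ z
    rw [hz]
    ring
  have hnn : 0 ≤ ∫ z, llr pl ρ z ∂pl := (integral_llr_nonneg_strict hplρ hint3).1
  have e3 : ∫ x, llr μ m x ∂μ = ∫ z, llr μ m z.1 ∂pl := by
    rw [← hpl, integral_map measurable_fst.aemeasurable
      (stronglyMeasurable_llr _ _).aestronglyMeasurable]
  rw [e3]
  calc ∫ z, llr μ m z.1 ∂pl ≤ ∫ z, llr pl ρ z ∂pl + ∫ z, llr μ m z.1 ∂pl := by linarith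
    _ = ∫ z, (llr pl ρ z + llr μ m z.1) ∂pl := (integral_add hint3 hint2).symm
    _ = ∫ z, llr pl R z ∂pl := integral_congr_ae (by
        filter_upwards [hch] with z hz
        exact hz.symm)

end AuxEntropy

lemma R01_map_fst {n : ℕ} {m : Measure (EuclideanSpace ℝ (Fin n))} [SigmaFinite m]
    {p1 : EuclideanSpace ℝ (Fin n) → EuclideanSpace ℝ (Fin n) → ℝ}
    (hmeas : Measurable (Function.uncurry p1))
    (hmass : ∀ x, ∫⁻ y, ENNReal.ofReal (p1 x y) ∂m = 1) :
    (R01 n m p1).map Prod.fst = m := by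
  have hmeas' : Measurable fun z : EuclideanSpace ℝ (Fin n) × EuclideanSpace ℝ (Fin n) =>
      ENNReal.ofReal (p1 z.1 z.2) := hmeas.ennreal_ofReal
  ext A hA
  rw [Measure.map_apply measurable_fst hA, R01, withDensity_apply _ (measurable_fst hA)]
  have hpre : (Prod.fst ⁻¹' A : Set (EuclideanSpace ℝ (Fin n) × EuclideanSpace ℝ (Fin n)))
      = A ×ˢ Set.univ := by
    ext z; simp
  rw [hpre, ← Measure.prod_restrict, Measure.restrict_univ,
    MeasureTheory.lintegral_prod _ hmeas'.aemeasurable]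
  simp only [hmass]
  simp

/-- **Entropic cost on the diagonal** (Remark (2) of Section 3): `A(μ,μ) ≥ H(μ|m)`;
in particular, if `m` is a probability measure and `μ ≠ m`, then
`A(μ,μ) ≥ H(μ|m) > 0`. -/
theorem entropic_cost_diagonal (n : ℕ) (hn : 0 < n)
    (V : EuclideanSpace ℝ (Fin n) → ℝ) (hV : ContDiff ℝ 2 V) (hExi : Exi n V)
    (p : ℝ → EuclideanSpace ℝ (Fin n) → EuclideanSpace ℝ (Fin n) → ℝ)
    (hKol : IsKolmogorov n V (mV n V) p)
    (μ : Measure (EuclideanSpace ℝ (Fin n))) (hμ : IsProbabilityMeasure μ)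
    (hReg2 : Reg2 n (mV n V) (p 1) μ μ) :
    relEnt μ (mV n V) ≤ entCost (R01 n (mV n V) (p 1)) μ μ ∧
      (IsProbabilityMeasure (mV n V) → μ ≠ mV n V → (0 : EReal) < relEnt μ (mV n V)) := by
  haveI : SigmaFinite (mV n V) := by unfold mV; infer_instance
  haveI : SigmaFinite (R01 n (mV n V) (p 1)) := by unfold R01; infer_instance
  obtain ⟨-, hne, -⟩ := hReg2
  have hcond : μ ≪ mV n V ∧ Integrable (llr μ (mV n V)) μ := by
    by_contra h
    exact hne (relEnt_eq_top_of_not h)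
  obtain ⟨hμm, hμint⟩ := hcond
  have hint : ∀ x, Integrable (fun y => p 1 x y) (mV n V) := by
    intro x
    by_contra h
    have h1 := hKol.mass 1 one_pos x
    rw [integral_undef h] at h1
    exact one_ne_zero h1.symm
  have hmass : ∀ x, ∫⁻ y, ENNReal.ofReal (p 1 x y) ∂(mV n V) = 1 := by
    intro x
    rw [← ofReal_integral_eq_lintegral_ofReal (hint x)
      (ae_of_all _ fun y => hKol.nonneg 1 x y), hKol.mass 1 one_pos x, ENNReal.ofReal_one]
  have hmap : (R01 n (mV n V) (p 1)).map Prod.fst = mV n V :=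
    R01_map_fst (hKol.meas 1) hmass
  constructor
  · apply le_sInf
    rintro e ⟨pl, hplprob, hfst, hsnd, rfl⟩
    haveI := hplprob
    by_cases hc : pl ≪ R01 n (mV n V) (p 1) ∧ Integrable (llr pl (R01 n (mV n V) (p 1))) pl
    · rw [relEnt_eq_of_cond hμm hμint, relEnt_eq_of_cond hc.1 hc.2]
      exact EReal.coe_le_coe_iff.mpr (integral_llr_fst_le hmap hμm hμint hfst hc.1 hc.2)
    · rw [relEnt_eq_top_of_not hc]
      exact le_top
  · intro hmprob hμnem
    haveI := hmprob
    rw [relEnt_eq_of_cond hμm hμint]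
    exact_mod_cast EReal.coe_pos.mpr ((integral_llr_nonneg_strict hμm hμint).2 hμnem)
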